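/- Fix n ≥ 3 distinct points t_1,...,t_n on P^1 and democratic weights w_i = w with 1/n < w < 1/(n-2). A degree -1 rank-2 quasi-parabolic bundle (E, l) over P^1 is w-stable if and only if: E ≅ O ⊕ O(-1), no parabolic direction l_i lies in the subbundle O, and not all l_i lie in a common subbundle O(-1) ↪ E. -/

import Mathlib

/-!
Model of rank-2 bundles on `P¹`: `E = O(d1) ⊕ O(d2)` with `d1 ≤ d2` (every
degree `-1` bundle is of this form), marked points in the affine chart and away
from `0`.  In the case `(d1, d2) = (-1, 0)`, i.e. `E = O ⊕ O(-1)`, the special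
subbundle `O ↪ E` is the second factor, with constant fiber `span{![0,1]}`.
-/

/-- `degLE f m`: `f` defines a section of `O(m)` on `P¹`, i.e. `deg f ≤ m`. -/
def degLE (f : Polynomial ℂ) (m : ℤ) : Prop :=
  ∀ k : ℕ, m < (k : ℤ) → f.coeff k = 0

/-- The fiber at `z` of the line subbundle of `O(d1) ⊕ O(d2)` given by `(f, g)`. -/
noncomputable def fiber (f g : Polynomial ℂ) (z : ℂ) : Submodule ℂ (Fin 2 → ℂ) :=
  Submodule.span ℂ {![f.eval z, g.eval z]}

/-- A line subbundle `O(e) ↪ O(d1) ⊕ O(d2)`. -/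
structure LineSub (d1 d2 : ℤ) : Type where
  e : ℤ
  f : Polynomial ℂ
  g : Polynomial ℂ
  hf : degLE f (d1 - e)
  hg : degLE g (d2 - e)
  nz : ∀ z : ℂ, f.eval z ≠ 0 ∨ g.eval z ≠ 0
  sat : ¬ (degLE f (d1 - e - 1) ∧ degLE g (d2 - e - 1))

open scoped Classical in
/-- The stability index
`Stab(F) = deg E - 2 deg F + Σ_{lᵢ ⊄ F} wᵢ - Σ_{lᵢ ⊂ F} wᵢ`. -/
noncomputable def Stab (d1 d2 : ℤ) {n : ℕ} (t : Fin n → ℂ)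
    (l : Fin n → Submodule ℂ (Fin 2 → ℂ)) (w : Fin n → ℝ)
    (F : LineSub d1 d2) : ℝ :=
  ((d1 + d2 : ℤ) : ℝ) - 2 * (F.e : ℝ)
    + ∑ i, (if l i = fiber F.f F.g (t i) then -(w i) else w i)

/-!
With constant weight `w`, a subbundle `O(e)` containing `k` of the `n` parabolic directions has
stability index `-1 - 2e + (n - 2k) w`, and the bounds on `w` say `1 < n w`, `(n - 2) w < 1`
and `n w < 3`. Testing against the factor `O(d2)` forces `d2 = 0` and forbids parabolic
directions in it. Conversely, for `E = O ⊕ O(-1)`: a subbundle of degree `0` is the factor `O`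
itself (so `k = 0`), one of degree `-1` is destabilizing only if it contains all `n` directions,
and one of degree `≤ -2` never is.
-/

open Finset

theorem Finset.sum_ite_neg_const {ι R : Type*} [Fintype ι] [CommRing R] (P : ι → Prop)
    [DecidablePred P] (w : R) :
    ∑ i, (if P i then -w else w) = ((Fintype.card ι : R) - 2 * #{i | P i}) * w := by
  rw [Finset.sum_ite, sum_const, sum_const, nsmul_eq_mul, nsmul_eq_mul,
    ← card_univ, ← card_filter_add_card_filter_not (s := univ) P]
  push_cast
  ring

lemma degLE.eq_zero {f : Polynomial ℂ} {m : ℤ} (h : degLE f m) (hm : m < 0) : f = 0 :=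
  Polynomial.ext fun k => h k (hm.trans_le k.cast_nonneg)

namespace LineSub

variable {d1 d2 : ℤ}

lemma e_le_max (F : LineSub d1 d2) : F.e ≤ max d1 d2 := by
  by_contra! h
  have hf := F.hf.eq_zero (by omega)
  have hg := F.hg.eq_zero (by omega)
  simpa [hf, hg] using F.nz 0

lemma f_eq_zero_of_lt (F : LineSub d1 d2) (h : d1 < F.e) : F.f = 0 :=
  F.hf.eq_zero (by omega)

lemma fiber_eq_span_of_f_eq_zero (F : LineSub d1 d2) (hf : F.f = 0) (z : ℂ) :
    fiber F.f F.g z = Submodule.span ℂ {![(0 : ℂ), 1]} := by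
  have hg : F.g.eval z ≠ 0 := by simpa [hf] using F.nz z
  have hv : ![F.f.eval z, F.g.eval z] = F.g.eval z • ![(0 : ℂ), 1] := by
    ext i; fin_cases i <;> simp [hf]
  rw [fiber, hv, Submodule.span_singleton_smul_eq hg.isUnit]

noncomputable def snd (d1 d2 : ℤ) : LineSub d1 d2 where
  e := d2
  f := 0
  g := 1
  hf _ _ := Polynomial.coeff_zero _
  hg k hk := Polynomial.coeff_one.trans (if_neg (by omega))
  nz _ := Or.inr (by simp)
  sat h := by simpa using h.2 0 (by omega)

@[simp] lemma snd_e : (snd d1 d2).e = d2 := rfl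

lemma fiber_snd (z : ℂ) :
    fiber (snd d1 d2).f (snd d1 d2).g z = Submodule.span ℂ {![(0 : ℂ), 1]} :=
  (snd d1 d2).fiber_eq_span_of_f_eq_zero rfl z

open scoped Classical in
noncomputable def numContained {n : ℕ} (t : Fin n → ℂ) (l : Fin n → Submodule ℂ (Fin 2 → ℂ))
    (F : LineSub d1 d2) : ℕ :=
  #{i | l i = fiber F.f F.g (t i)}

variable {n : ℕ} {t : Fin n → ℂ} {l : Fin n → Submodule ℂ (Fin 2 → ℂ)} (F : LineSub d1 d2)

lemma numContained_le : F.numContained t l ≤ n :=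
  (card_filter_le _ _).trans_eq (card_fin n)

lemma numContained_pos {j : Fin n} (hj : l j = fiber F.f F.g (t j)) :
    0 < F.numContained t l :=
  card_pos.2 ⟨j, by simpa using hj⟩

lemma numContained_lt {j : Fin n} (hj : l j ≠ fiber F.f F.g (t j)) :
    F.numContained t l < n :=
  (card_lt_card (filter_ssubset.2 ⟨j, mem_univ j, hj⟩)).trans_eq (card_fin n)

lemma numContained_eq (h : ∀ i, l i = fiber F.f F.g (t i)) : F.numContained t l = n := by
  rw [numContained, card_filter_eq_iff.2 fun i _ => h i, card_fin]

lemma numContained_eq_zero (h : ∀ i, l i ≠ fiber F.f F.g (t i)) : F.numContained t l = 0 :=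
  card_filter_eq_zero_iff.2 fun i _ => h i

lemma stab_const_weight (w : ℝ) :
    Stab d1 d2 t l (fun _ => w) F
      = (d1 + d2 : ℝ) - 2 * F.e + (n - 2 * F.numContained t l) * w := by
  classical
  rw [Stab, Finset.sum_ite_neg_const, Fintype.card_fin, numContained]
  push_cast
  congr

end LineSub

section Stability

variable {n : ℕ} {t : Fin n → ℂ} {l : Fin n → Submodule ℂ (Fin 2 → ℂ)} {w : ℝ}

lemma democratic_weight_bounds (hn : 3 ≤ n) (hw1 : 1 / (n : ℝ) < w)
    (hw2 : w < 1 / ((n : ℝ) - 2)) :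
    0 < w ∧ 1 < n * w ∧ (n - 2) * w < 1 ∧ n * w < 3 := by
  have hn' : (3 : ℝ) ≤ n := by exact_mod_cast hn
  have hw : 0 < w := lt_trans (by positivity) hw1
  have h1 : 1 < n * w := by rwa [div_lt_iff₀ (by linarith), mul_comm] at hw1
  have h2 : (n - 2) * w < 1 := by rwa [lt_div_iff₀ (by linarith), mul_comm] at hw2
  exact ⟨hw, h1, h2, by nlinarith⟩

lemma conditions_of_stable {d1 d2 : ℤ} (h12 : d1 ≤ d2) (hdeg : d1 + d2 = -1) (hw : 0 < w)
    (h1 : 1 < n * w) (h2 : (n - 2) * w < 1) (h3 : n * w < 3)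
    (hstab : ∀ F : LineSub d1 d2, 0 < Stab d1 d2 t l (fun _ => w) F) :
    d1 = -1 ∧ d2 = 0 ∧ (∀ i, l i ≠ Submodule.span ℂ {![(0 : ℂ), 1]}) ∧
      ¬ ∃ F : LineSub d1 d2, F.e = -1 ∧ ∀ i, l i = fiber F.f F.g (t i) := by
  have hsnd := hstab (LineSub.snd d1 d2)
  rw [LineSub.stab_const_weight, LineSub.snd_e] at hsnd
  have hgap : ((d2 - d1 : ℤ) : ℝ) < 3 := by
    push_cast
    nlinarith [mul_nonneg ((LineSub.snd d1 d2).numContained t l).cast_nonneg hw.le]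
  obtain ⟨rfl, rfl⟩ : d1 = -1 ∧ d2 = 0 := by
    have : d2 - d1 < 3 := by exact_mod_cast hgap
    omega
  refine ⟨rfl, rfl, fun i hi => ?_, fun ⟨F, hFe, hF⟩ => ?_⟩
  · have hk1 := (LineSub.snd (-1) 0).numContained_pos (hi.trans (LineSub.fiber_snd (t i)).symm)
    have : (1 : ℝ) ≤ (LineSub.snd (-1) 0).numContained t l := by exact_mod_cast hk1
    push_cast at hsnd
    nlinarith
  · have hF' := hstab F
    rw [LineSub.stab_const_weight, hFe, F.numContained_eq hF] at hF'
    push_cast at hF'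
    linarith

lemma stable_of_conditions (hw : 0 < w) (h1 : 1 < n * w) (h2 : (n - 2) * w < 1)
    (h3 : n * w < 3) (hspan : ∀ i, l i ≠ Submodule.span ℂ {![(0 : ℂ), 1]})
    (hgen : ¬ ∃ F : LineSub (-1) 0, F.e = -1 ∧ ∀ i, l i = fiber F.f F.g (t i))
    (F : LineSub (-1) 0) : 0 < Stab (-1) 0 t l (fun _ => w) F := by
  rw [LineSub.stab_const_weight]
  have hk : (F.numContained t l : ℝ) ≤ n := by exact_mod_cast F.numContained_le
  obtain he | he | he : F.e ≤ -2 ∨ F.e = -1 ∨ F.e = 0 := by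
    have := F.e_le_max
    omega
  · have : (F.e : ℝ) ≤ -2 := by exact_mod_cast he
    push_cast
    nlinarith
  · obtain ⟨j, hj⟩ : ∃ j, l j ≠ fiber F.f F.g (t j) := by
      by_contra! hall
      exact hgen ⟨F, he, hall⟩
    have hk' : (F.numContained t l : ℝ) + 1 ≤ n := by exact_mod_cast F.numContained_lt hj
    rw [he]
    push_cast
    nlinarith
  · have hf := F.f_eq_zero_of_lt (by omega)
    rw [F.numContained_eq_zero fun i hi => hspan i (hi.trans (F.fiber_eq_span_of_f_eq_zero hf _)),
      he]
    push_cast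
    linarith

end Stability

theorem stmt3_general (n : ℕ) (hn : 3 ≤ n) (t : Fin n → ℂ)
    (d1 d2 : ℤ) (h12 : d1 ≤ d2) (hdeg : d1 + d2 = -1)
    (l : Fin n → Submodule ℂ (Fin 2 → ℂ))
    (w : ℝ) (hw1 : 1 / (n : ℝ) < w) (hw2 : w < 1 / ((n : ℝ) - 2)) :
    (∀ F : LineSub d1 d2, 0 < Stab d1 d2 t l (fun _ => w) F)
      ↔ (d1 = -1 ∧ d2 = 0 ∧
          (∀ i, l i ≠ Submodule.span ℂ {![(0 : ℂ), 1]}) ∧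
          ¬ ∃ F : LineSub d1 d2, F.e = -1 ∧ ∀ i, l i = fiber F.f F.g (t i)) := by
  obtain ⟨hw, h1, h2, h3⟩ := democratic_weight_bounds hn hw1 hw2
  refine ⟨conditions_of_stable h12 hdeg hw h1 h2 h3, ?_⟩
  rintro ⟨rfl, rfl, hspan, hgen⟩
  exact stable_of_conditions hw h1 h2 h3 hspan hgen

/-- for `n ≥ 3` and democratic weights `wᵢ = w`, `1/n < w < 1/(n-2)`,
a degree `-1` rank-2 quasi-parabolic bundle `(E, l)` over `P¹` is `w`-stable iff
`E ≅ O ⊕ O(-1)`, no parabolic `lᵢ` lies in the subbundle `O`, and not all `lᵢ`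
lie in a common subbundle `O(-1) ↪ E`. -/
theorem stmt3 (n : ℕ) (hn : 3 ≤ n) (t : Fin n → ℂ) (ht : Function.Injective t)
    (d1 d2 : ℤ) (h12 : d1 ≤ d2) (hdeg : d1 + d2 = -1)
    (l : Fin n → Submodule ℂ (Fin 2 → ℂ))
    (hl : ∀ i, Module.finrank ℂ (l i) = 1)
    (w : ℝ) (hw1 : 1 / (n : ℝ) < w) (hw2 : w < 1 / ((n : ℝ) - 2)) :
    (∀ F : LineSub d1 d2, 0 < Stab d1 d2 t l (fun _ => w) F)
      ↔ (d1 = -1 ∧ d2 = 0 ∧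
          (∀ i, l i ≠ Submodule.span ℂ {![(0 : ℂ), 1]}) ∧
          ¬ ∃ F : LineSub d1 d2, F.e = -1 ∧ ∀ i, l i = fiber F.f F.g (t i)) :=
  stmt3_general n hn t d1 d2 h12 hdeg l w hw1 hw2
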